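/- arXiv:math/0507399 — 2 statements merged into one kernel-verified Lean document; each statement's English description precedes it below -/
import Mathlib

section
/- There are no 2-dimensional irreducible representations of PSL₂(ℤ) = ⟨x, y | x² = y³ = 1⟩ over an algebraically closed field of characteristic 3 whose images of xyxy² and xy²xy are diagonal matrices. -/
/-!
Put `A = XYXY²` and `B = XY²XY`. The relations give `A * Y * B = Y`, so `Y i j = A i i * Y i j * B j j`
for diagonal `A`, `B`. If `B` is not scalar, no row of `Y` has two nonzero entries; as `Y³ = 1`, `Y` is
then diagonal, and in characteristic 3 the only cube root of unity is `1`, so `Y = 1`. If `B = c` is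
scalar, then `Z = XYX` satisfies `Z³ = 1` and `Z² Y = c`, hence `Y = c Z`, `c³ = 1`, `c = 1` and
`XYX = Y`. Either way `X` and `Y` commute, so they cannot generate the noncommutative algebra `M₂(k)`.
-/

open Matrix

theorem eq_one_of_pow_three_eq_one {R : Type*} [CommRing R] [IsReduced R] [CharP R 3] {t : R}
    (ht : t ^ 3 = 1) : t = 1 :=
  frobenius_inj R 3 (by simpa [frobenius_def] using ht)

theorem Algebra.commute_of_adjoin_pair_eq_top {R A : Type*} [CommSemiring R] [Semiring A]
    [Algebra R A] {x y : A} (hxy : Commute x y) (h : Algebra.adjoin R {x, y} = ⊤) (a b : A) :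
    Commute a b := by
  have mem : ∀ c : A, c ∈ Algebra.adjoin R {x, y} := fun c => h ▸ trivial
  have hgen : ∀ c, ∀ g ∈ ({x, y} : Set A), Commute g c := by
    rintro c _ (rfl | rfl) <;>
      refine commute_of_mem_adjoin_of_forall_mem_commute (mem c) ?_ <;>
      rintro _ (rfl | rfl)
    exacts [Commute.refl _, hxy, hxy.symm, Commute.refl _]
  exact commute_of_mem_adjoin_of_forall_mem_commute (mem b) fun g hg => (hgen a g hg).symm

theorem Matrix.not_commute_single_zero_one {R : Type*} [CommRing R] [Nontrivial R] :
    ¬ Commute (single (0 : Fin 2) (1 : Fin 2) (1 : R)) (single 1 0 1) := by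
  intro h
  simpa [single_mul_single_same, single_apply] using congrFun (congrFun h.eq 0) 0

theorem mul_pow_two_mul_mul_mul_pow_two_eq {M : Type*} [Monoid M] {x y : M}
    (hx : x ^ 2 = 1) (hy : y ^ 3 = 1) : x * y * x * y ^ 2 * y * (x * y ^ 2 * x * y) = y := by
  have hx' : ∀ z, x * (x * z) = z := fun z => by rw [← mul_assoc, ← sq, hx, one_mul]
  have hy' : ∀ z, y * (y * (y * z)) = z := fun z => by
    rw [← mul_assoc, ← mul_assoc, ← pow_three', hy, one_mul]
  simp only [sq, mul_assoc, hx', hy']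

theorem commute_of_mul_pow_two_mul_mul_eq_algebraMap {k A : Type*} [Field k] [CharP k 3] [Ring A]
    [Nontrivial A] [Algebra k A] {x y : A} (hx : x ^ 2 = 1) (hy : y ^ 3 = 1) {c : k}
    (h : x * y ^ 2 * x * y = algebraMap k A c) : Commute x y := by
  have hx' : ∀ z, x * (x * z) = z := fun z => by rw [← mul_assoc, ← sq, hx, one_mul]
  have hy' : ∀ z, y * (y * (y * z)) = z := fun z => by
    rw [← mul_assoc, ← mul_assoc, ← pow_three', hy, one_mul]
  set z := x * y * x with hz
  have hz3 : z ^ 3 = 1 := by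
    simp only [hz, pow_three, mul_assoc, hx', hy']
    rw [← sq, hx]
  have hyz : y = c • z := by
    calc y = z ^ 3 * y := by rw [hz3, one_mul]
      _ = z * (x * y ^ 2 * x * y) := by simp only [hz, pow_succ, pow_zero, one_mul, mul_assoc, hx']
      _ = c • z := by rw [h, ← Algebra.commutes, Algebra.algebraMap_eq_smul_one, smul_one_mul]
  have hc : c = 1 := by
    refine eq_one_of_pow_three_eq_one ((algebraMap k A).injective ?_)
    calc algebraMap k A (c ^ 3) = c ^ 3 • z ^ 3 := by rw [hz3, Algebra.algebraMap_eq_smul_one]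
      _ = y ^ 3 := by rw [hyz, smul_pow]
      _ = algebraMap k A 1 := by rw [hy, map_one]
  rw [hc, one_smul] at hyz
  calc x * y = x * (x * y * x) := by rw [← hz, ← hyz]
    _ = y * x := by simp only [mul_assoc, hx']

theorem Matrix.diag_eq_of_mul_mul_eq_self {n R : Type*} [Fintype n] [DecidableEq n] [CommRing R]
    [IsDomain R] {A Y B : Matrix n n R} (hA : A.IsDiag) (hB : B.IsDiag) (h : A * Y * B = Y)
    {i j j' : n} (hj : Y i j ≠ 0) (hj' : Y i j' ≠ 0) : B j j = B j' j' := by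
  rw [← hA.diagonal_diag, ← hB.diagonal_diag] at h
  have key : ∀ j, Y i j ≠ 0 → A i i * B j j = 1 := fun j hj => by
    have := congrFun (congrFun h i) j
    simp only [diagonal_mul, mul_diagonal, diag_apply] at this
    exact mul_right_cancel₀ hj (by linear_combination this)
  calc B j j = B j j * (A i i * B j' j') := by rw [key j' hj', mul_one]
    _ = (A i i * B j j) * B j' j' := by ring
    _ = B j' j' := by rw [key j hj, one_mul]

theorem Matrix.isDiag_of_pow_three_eq_one {R : Type*} [CommRing R] [Nontrivial R]
    {Y : Matrix (Fin 2) (Fin 2) R} (hrow : ∀ i, Y i 0 = 0 ∨ Y i 1 = 0) (h : Y ^ 3 = 1) :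
    Y.IsDiag := by
  have h00 := congrFun (congrFun h 0) 0
  have h11 := congrFun (congrFun h 1) 1
  simp only [pow_three, mul_apply, Fin.sum_univ_two, one_apply_eq] at h00 h11
  rcases hrow 0 with h0 | h0 <;> rcases hrow 1 with h1 | h1
  · simp [h0, h1] at h00
  · simp [h0, h1] at h00
  · intro i j hij
    fin_cases i <;> fin_cases j <;> simp_all
  · simp [h0, h1] at h11

theorem Matrix.IsDiag.eq_one_of_pow_three_eq_one {n R : Type*} [Fintype n] [DecidableEq n]
    [CommRing R] [IsReduced R] [CharP R 3] {Y : Matrix n n R} (hY : Y.IsDiag) (h : Y ^ 3 = 1) :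
    Y = 1 := by
  rw [← hY.diagonal_diag, diagonal_pow, ← diagonal_one] at h
  rw [← hY.diagonal_diag, ← diagonal_one]
  exact congrArg diagonal (funext fun i => _root_.eq_one_of_pow_three_eq_one
    (congrFun (diagonal_injective h) i))

theorem Matrix.IsDiag.eq_algebraMap_of_fin_two {R : Type*} [CommRing R]
    {B : Matrix (Fin 2) (Fin 2) R} (hB : B.IsDiag) (h : B 0 0 = B 1 1) :
    B = algebraMap R _ (B 0 0) := by
  rw [← hB.diagonal_diag, algebraMap_eq_diagonal]
  congr 1
  funext i
  fin_cases i <;> simp [h]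

theorem stmt_11_general {k : Type*} [Field k] [CharP k 3] :
    ¬ ∃ X Y : Matrix (Fin 2) (Fin 2) k,
      IsUnit X ∧ IsUnit Y ∧ X ^ 2 = 1 ∧ Y ^ 3 = 1 ∧
      (X * Y * X * Y ^ 2).IsDiag ∧ (X * Y ^ 2 * X * Y).IsDiag ∧
      Algebra.adjoin k ({X, Y} : Set (Matrix (Fin 2) (Fin 2) k)) = ⊤ := by
  rintro ⟨X, Y, -, -, hX, hY, hA, hB, htop⟩
  have hXY : Commute X Y := by
    by_cases hscalar : (X * Y ^ 2 * X * Y) 0 0 = (X * Y ^ 2 * X * Y) 1 1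
    · exact commute_of_mul_pow_two_mul_mul_eq_algebraMap hX hY
        (hB.eq_algebraMap_of_fin_two hscalar)
    · have hrow : ∀ i, Y i 0 = 0 ∨ Y i 1 = 0 := fun i => by
        by_contra! hne
        exact hscalar (diag_eq_of_mul_mul_eq_self hA hB
          (mul_pow_two_mul_mul_mul_pow_two_eq hX hY) hne.1 hne.2)
      rw [(isDiag_of_pow_three_eq_one hrow hY).eq_one_of_pow_three_eq_one hY]
      exact Commute.one_right X
  exact not_commute_single_zero_one (Algebra.commute_of_adjoin_pair_eq_top hXY htop _ _)

theorem stmt_11 {k : Type*} [Field k] [IsAlgClosed k] [CharP k 3] :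
    ¬ ∃ X Y : Matrix (Fin 2) (Fin 2) k,
      IsUnit X ∧ IsUnit Y ∧ X ^ 2 = 1 ∧ Y ^ 3 = 1 ∧
      (X * Y * X * Y ^ 2).IsDiag ∧ (X * Y ^ 2 * X * Y).IsDiag ∧
      Algebra.adjoin k ({X, Y} : Set (Matrix (Fin 2) (Fin 2) k)) = ⊤ :=
  stmt_11_general
end

section
/- Let X, Y ∈ GL_n(k) with X² = Y³ = I, Λ = XYXY² diagonal, Γ = XY²XY diagonal, and suppose Λ + Λ⁻¹ = Γ + Γ⁻¹ is a scalar matrix and (YX)⁶ = I. Then (YX)((YX)² − (XY)²)(XY − YX) = 0. -/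
/-!
Put `A = YX` and `B = XY`. From `X² = Y³ = 1` one gets `B = ΛA = AΓ` and `ΓAΛ = B`, so
conjugation by `A` sends `Γ ↦ Λ`, `Λ ↦ Γ⁻¹Λ` and, as the diagonal matrices `Λ, Γ` commute,
`Γ⁻¹Λ ↦ Γ⁻¹`. Hence `(A² - B²)(B - A) = (1 - ΛΓ⁻¹Λ)(Γ⁻¹ - 1)A³`, and the first two factors
multiply to `Γ⁻¹ q(Λ) - q(Γ⁻¹Λ)` for `q(t) = t² - (λ + λ⁻¹)t + 1`, which vanishes because `Λ` and
its conjugate `Γ⁻¹Λ` are roots of `q`.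
-/

section Words

variable {M : Type*} [Monoid M] {x y : M}

theorem mul_mul_cancel_of_sq_eq_one (hx : x ^ 2 = 1) (m : M) : x * (x * m) = m := by
  rw [← mul_assoc, ← sq, hx, one_mul]

theorem mul_mul_mul_cancel_of_pow_three_eq_one (hy : y ^ 3 = 1) (m : M) :
    y * (y * (y * m)) = m := by
  rw [← mul_assoc, ← mul_assoc, ← sq, ← pow_succ, hy, one_mul]

theorem lambda_mul_yx (hx : x ^ 2 = 1) (hy : y ^ 3 = 1) :
    x * y * x * y ^ 2 * (y * x) = x * y := by
  simp only [sq, mul_assoc, mul_mul_mul_cancel_of_pow_three_eq_one hy, (sq x).symm.trans hx,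
    mul_one]

theorem yx_mul_gamma (hx : x ^ 2 = 1) (hy : y ^ 3 = 1) :
    y * x * (x * y ^ 2 * x * y) = x * y := by
  simp only [sq, mul_assoc, mul_mul_cancel_of_sq_eq_one hx,
    mul_mul_mul_cancel_of_pow_three_eq_one hy]

theorem gamma_mul_yx_mul_lambda (hx : x ^ 2 = 1) (hy : y ^ 3 = 1) :
    x * y ^ 2 * x * y * (y * x) * (x * y * x * y ^ 2) = x * y := by
  simp only [sq, mul_assoc, mul_mul_cancel_of_sq_eq_one hx,
    mul_mul_mul_cancel_of_pow_three_eq_one hy, (pow_three y).symm.trans hy, mul_one]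

end Words

section

variable {k R : Type*} [CommRing k] [Ring R] [Algebra k R]

theorem SemiconjBy.sq_sub_smul_add_one {a x y : R} (h : SemiconjBy a x y) (c : k) :
    SemiconjBy a (x ^ 2 - c • x + 1) (y ^ 2 - c • y + 1) :=
  ((h.pow_right 2).sub_right (h.smul_right c)).add_right (.one_right a)

theorem sq_sub_smul_add_one_eq_zero_of_add_inv {u : Rˣ} {c : k} (h : (u : R) + ↑u⁻¹ = c • 1) :
    (u : R) ^ 2 - c • (u : R) + 1 = 0 := by
  have := congrArg ((u : R) * ·) h
  simp only [mul_add, Units.mul_inv, mul_smul_comm, mul_one] at this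
  rw [sq, ← this]; abel

theorem one_sub_mul_mul_sub_one_eq_zero {ℓ u : R} (c : k) (hℓu : Commute ℓ u)
    (h1 : ℓ ^ 2 - c • ℓ + 1 = 0) (h2 : (u * ℓ) ^ 2 - c • (u * ℓ) + 1 = 0) :
    (1 - ℓ * (u * ℓ)) * (u - 1) = 0 := by
  have e : (1 - ℓ * (u * ℓ)) * (u - 1)
      = u * (ℓ ^ 2 - c • ℓ + 1) - ((u * ℓ) ^ 2 - c • (u * ℓ) + 1) := by
    have h : ℓ * (u * ℓ) = u * (ℓ * ℓ) := by rw [← mul_assoc, hℓu.eq, mul_assoc]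
    have h' : u * (ℓ * ℓ) * u = u * ℓ * (u * ℓ) := by
      rw [mul_assoc, mul_assoc, mul_assoc, ← hℓu.eq]
    simp only [sub_mul, mul_sub, h, h', sq]
    noncomm_ring
  rw [e, h1, h2, mul_zero, sub_zero]

theorem sq_sub_sq_mul_sub_eq_zero {A L G : Rˣ} {c : k} (hLG : Commute L G)
    (hAG : A * G = L * A) (hGAL : G * A * L = L * A) (hL : (L : R) + ↑L⁻¹ = c • 1) :
    ((A : R) ^ 2 - (L * A : R) ^ 2) * (L * A - A) = 0 := by
  have hAL : SemiconjBy A L (G⁻¹ * L) := by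
    rw [SemiconjBy, mul_assoc, eq_inv_mul_iff_mul_eq, ← mul_assoc, hGAL]
  have hAM : SemiconjBy A (G⁻¹ * L) G⁻¹ := by
    have h := (SemiconjBy.inv_right hAG).mul_right hAL
    rwa [← mul_assoc, hLG.inv_inv.eq, inv_mul_cancel_right] at h
  set a : R := ↑A
  set ℓ : R := ↑L
  set u : R := ↑G⁻¹
  have sL : SemiconjBy a ℓ (u * ℓ) := by exact_mod_cast hAL.units_val
  have sM : SemiconjBy a (u * ℓ) u := by exact_mod_cast hAM.units_val
  have hq := sq_sub_smul_add_one_eq_zero_of_add_inv hL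
  have hq' : (u * ℓ) ^ 2 - c • (u * ℓ) + 1 = 0 := by
    have h := (sL.sq_sub_smul_add_one c).eq
    rw [hq, mul_zero] at h
    exact A.isUnit.mul_left_eq_zero.mp h.symm
  have hfactor := one_sub_mul_mul_sub_one_eq_zero c (hLG.inv_right.units_val) hq hq'
  have sSq : SemiconjBy (a ^ 2) (ℓ - 1) (u - 1) := by
    rw [sq]
    exact (sM.sub_right (.one_right a)).mul_left (sL.sub_right (.one_right a))
  have hsq : (ℓ * a) ^ 2 = ℓ * (u * ℓ) * a ^ 2 := by
    rw [sq, sq, mul_assoc, ← mul_assoc a, sL.eq]; noncomm_ring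
  calc (a ^ 2 - (ℓ * a) ^ 2) * (ℓ * a - a) = (1 - ℓ * (u * ℓ)) * (a ^ 2 * (ℓ - 1)) * a := by
        rw [hsq]; noncomm_ring
    _ = (1 - ℓ * (u * ℓ)) * (u - 1) * a ^ 3 := by rw [sSq.eq]; noncomm_ring
    _ = 0 := by rw [hfactor, zero_mul]

theorem yx_mul_sq_sub_sq_mul_sub_eq_zero {x y : Rˣ} {c : k} (hx : x ^ 2 = 1) (hy : y ^ 3 = 1)
    (hΛΓ : Commute (x * y * x * y ^ 2) (x * y ^ 2 * x * y))
    (hΛ : (↑(x * y * x * y ^ 2) : R) + ↑(x * y * x * y ^ 2)⁻¹ = c • 1) :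
    (y * x : R) * ((y * x : R) ^ 2 - (x * y : R) ^ 2) * (x * y - y * x) = 0 := by
  have h := sq_sub_sq_mul_sub_eq_zero hΛΓ
    ((yx_mul_gamma hx hy).trans (lambda_mul_yx hx hy).symm)
    ((gamma_mul_yx_mul_lambda hx hy).trans (lambda_mul_yx hx hy).symm) hΛ
  rw [← Units.val_mul, lambda_mul_yx hx hy] at h
  push_cast at h
  rw [mul_assoc, h, mul_zero]

end

theorem stmt_17_general {k : Type*} [Field k] {n : ℕ}
    (X Y : Matrix (Fin n) (Fin n) k)
    (hX2 : X ^ 2 = 1) (hY3 : Y ^ 3 = 1)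
    (hΛ : (X * Y * X * Y ^ 2).IsDiag) (hΓ : (X * Y ^ 2 * X * Y).IsDiag)
    (l : k)
    (hΛs : (X * Y * X * Y ^ 2) + (X * Y * X * Y ^ 2)⁻¹
         = (l + l⁻¹) • (1 : Matrix (Fin n) (Fin n) k)) :
    (Y * X) * ((Y * X) ^ 2 - (X * Y) ^ 2) * (X * Y - Y * X) = 0 := by
  lift X to (Matrix (Fin n) (Fin n) k)ˣ using .of_pow_eq_one hX2 two_ne_zero
  lift Y to (Matrix (Fin n) (Fin n) k)ˣ using .of_pow_eq_one hY3 three_ne_zero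
  refine yx_mul_sq_sub_sq_mul_sub_eq_zero (c := l + l⁻¹) (Units.ext (by simpa using hX2))
    (Units.ext (by simpa using hY3)) ?_ (by push_cast [Matrix.coe_units_inv]; exact hΛs)
  refine Units.ext ?_
  push_cast
  rw [← hΛ.diagonal_diag, ← hΓ.diagonal_diag]
  exact Matrix.commute_diagonal _ _

theorem stmt_17 {k : Type*} [Field k] {n : ℕ}
    (X Y : Matrix (Fin n) (Fin n) k) (hX : IsUnit X) (hY : IsUnit Y)
    (hX2 : X ^ 2 = 1) (hY3 : Y ^ 3 = 1)
    (hΛ : (X * Y * X * Y ^ 2).IsDiag) (hΓ : (X * Y ^ 2 * X * Y).IsDiag)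
    (l : k)
    (hΛs : (X * Y * X * Y ^ 2) + (X * Y * X * Y ^ 2)⁻¹
         = (l + l⁻¹) • (1 : Matrix (Fin n) (Fin n) k))
    (hΓs : (X * Y ^ 2 * X * Y) + (X * Y ^ 2 * X * Y)⁻¹
         = (l + l⁻¹) • (1 : Matrix (Fin n) (Fin n) k))
    (h6 : (Y * X) ^ 6 = 1) :
    (Y * X) * ((Y * X) ^ 2 - (X * Y) ^ 2) * (X * Y - Y * X) = 0 :=
  stmt_17_general X Y hX2 hY3 hΛ hΓ l hΛs
end
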